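/- For a finite list of integers (d₁, …, d_r), define ε(d₁, …, d_r) = Σ_{j=1}^{r} j·d_j + r(r+1)/2 + 1. Let k ≥ 0 and k₁, k₂ ≥ 0 with k₁ + k₂ = k + 1, let 1 ≤ i ≤ k₁, let d₁, …, d_k, e, D be integers, and let g ∈ {0, 1}, subject to the congruence D ≡ (Σ_{j=i}^{i+k₂−1} d_j) + e + k₂ + g (mod 2). Then ε(d₁, …, d_{i−1}, D, d_{i+k₂}, …, d_k) + ε(d_i, …, d_{i+k₂−1}) ≡ ε(d₁, …, d_k) + (Σ_{j=1}^{k} d_j) + k + (Σ_{j=1}^{i−1} d_j) + i·e + k₂·(Σ_{j=i+k₂}^{k} d_j) + k₁·k₂ + i·k₂ + g·i (mod 2). -/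

import Mathlib

/-- The sign function `ε(d₁, …, d_r) = ∑_{j=1}^r j·d_j + r(r+1)/2 + 1` of a finite list of
integers (the degrees of the boundary inputs). -/
def eps (L : List ℤ) : ℤ :=
  (∑ j : Fin L.length, (((j : ℕ) : ℤ) + 1) * L.get j) +
    (L.length : ℤ) * ((L.length : ℤ) + 1) / 2 + 1


def gw : ℤ → List ℤ → ℤ
  | _, [] => 0
  | c, x :: xs => (c + 1) * x + gw (c + 1) xs

lemma gw_eq (L : List ℤ) : ∀ c : ℤ,
    (∑ j : Fin L.length, (((j : ℕ) : ℤ) + 1 + c) * L.get j) = gw c L := by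
  induction L with
  | nil => intro c; simp [gw]
  | cons x xs ih =>
    intro c
    show (∑ j : Fin (xs.length + 1), (((j : ℕ) : ℤ) + 1 + c) * (x::xs).get j) = gw c (x::xs)
    rw [Fin.sum_univ_succ, gw, ← ih (c+1)]
    congr 1
    · simp only [List.get_cons_zero, Fin.val_zero, Nat.cast_zero]; ring
    · apply Finset.sum_congr rfl
      intro j _
      rw [List.get_cons_succ']
      push_cast [Fin.val_succ]
      ring

lemma gw_append (A B : List ℤ) : ∀ c : ℤ, gw c (A ++ B) = gw c A + gw (c + A.length) B := by
  induction A with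
  | nil => intro c; simp [gw]
  | cons x xs ih =>
    intro c
    simp only [List.cons_append, gw, List.length_cons, List.append_eq]
    rw [ih (c+1)]
    push_cast
    ring_nf

lemma gw_shift (L : List ℤ) : ∀ c : ℤ, gw c L = gw 0 L + c * L.sum := by
  induction L with
  | nil => intro c; simp [gw]
  | cons x xs ih =>
    intro c
    simp only [gw, List.sum_cons]
    rw [ih (c+1), ih (0+1)]
    ring

lemma eps_gw (L : List ℤ) :
    eps L = gw 0 L + (L.length : ℤ) * ((L.length : ℤ) + 1) / 2 + 1 := by
  rw [eps, ← gw_eq L 0]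
  norm_num

lemma two_T (n : ℕ) : 2 * ((n : ℤ) * ((n : ℤ) + 1) / 2) = (n : ℤ) * ((n : ℤ) + 1) :=
  Int.mul_ediv_cancel' (Int.even_mul_succ_self (n : ℤ)).two_dvd

/-- The sign lemma: comparing `ε` evaluated on a list `d = (d₁, …, d_k)`, on the inner
sublist `(d_i, …, d_{i+k₂-1})` of length `k₂`, and on the list of length `k₁` obtained by
replacing that sublist by a single entry `D`, where `D ≡ (∑_{j=i}^{i+k₂-1} d_j) + e + k₂ + g
(mod 2)` and `g ∈ {0, 1}`. -/
theorem eps_sign_lemma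
    (k k₁ k₂ i : ℕ) (hk : k₁ + k₂ = k + 1) (hi₁ : 1 ≤ i) (hi₂ : i ≤ k₁)
    (d : List ℤ) (hd : d.length = k)
    (e D g : ℤ) (hg : g = 0 ∨ g = 1)
    (hD : D ≡ ((d.drop (i - 1)).take k₂).sum + e + (k₂ : ℤ) + g [ZMOD 2]) :
    eps (d.take (i - 1) ++ D :: d.drop (i - 1 + k₂)) + eps ((d.drop (i - 1)).take k₂) ≡
      eps d + d.sum + (k : ℤ) + (d.take (i - 1)).sum + (i : ℤ) * e +
        (k₂ : ℤ) * (d.drop (i - 1 + k₂)).sum + (k₁ : ℤ) * (k₂ : ℤ) + (i : ℤ) * (k₂ : ℤ) +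
        g * (i : ℤ) [ZMOD 2] := by
  obtain ⟨a, rfl⟩ : ∃ a, i = a + 1 := ⟨i - 1, by omega⟩
  simp only [Nat.add_sub_cancel] at hD ⊢
  have hak : a + k₂ ≤ k := by omega
  set P := d.take a with hP
  set M := (d.drop a).take k₂ with hM
  set S := d.drop (a + k₂) with hS
  have hPl : P.length = a := by rw [hP, List.length_take, hd]; omega
  have hMl : M.length = k₂ := by
    rw [hM, List.length_take, List.length_drop, hd]; omega
  have hSl : S.length = k - (a + k₂) := by rw [hS, List.length_drop, hd]
  have hdec : d = P ++ (M ++ S) := by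
    rw [hP, hM, hS, ← List.drop_drop (i := k₂) (j := a) (l := d), List.take_append_drop,
      List.take_append_drop]
  have hsum : d.sum = P.sum + (M.sum + S.sum) := by
    conv_lhs => rw [hdec]
    simp
  have hlen1 : (P ++ D :: S).length = k₁ := by
    simp only [List.length_append, List.length_cons, hPl, hSl]; omega
  have e1 : eps (P ++ D :: S)
      = gw 0 P + ((a : ℤ) + 1) * D + gw 0 S + ((a : ℤ) + 1) * S.sum
        + (k₁ : ℤ) * ((k₁ : ℤ) + 1) / 2 + 1 := by
    rw [eps_gw, hlen1, gw_append, hPl]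
    rw [show gw ((0:ℤ) + (a:ℤ)) (D :: S)
        = ((0 + (a:ℤ)) + 1) * D + gw ((0 + (a:ℤ)) + 1) S from rfl, gw_shift S ((0 + (a:ℤ)) + 1)]
    ring
  have e2 : eps M = gw 0 M + (k₂ : ℤ) * ((k₂ : ℤ) + 1) / 2 + 1 := by
    rw [eps_gw, hMl]
  have hlen2 : (P ++ (M ++ S)).length = k := by
    simp only [List.length_append, hPl, hMl, hSl]; omega
  have e3 : eps d
      = gw 0 P + gw 0 M + (a : ℤ) * M.sum + gw 0 S + ((a : ℤ) + (k₂ : ℤ)) * S.sum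
        + (k : ℤ) * ((k : ℤ) + 1) / 2 + 1 := by
    conv_lhs => rw [hdec]
    rw [eps_gw, hlen2, gw_append, gw_append, hPl, hMl, gw_shift M, gw_shift S]
    push_cast
    ring
  have hkz : (k₁ : ℤ) + (k₂ : ℤ) = (k : ℤ) + 1 := by exact_mod_cast hk
  have hTT : (k : ℤ) * ((k : ℤ) + 1) / 2
      = (k₁ : ℤ) * ((k₁ : ℤ) + 1) / 2 + (k₂ : ℤ) * ((k₂ : ℤ) + 1) / 2
        + (k₁ : ℤ) * (k₂ : ℤ) - (k₁ : ℤ) - (k₂ : ℤ) := by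
    apply mul_left_cancel₀ (two_ne_zero (α := ℤ))
    rw [two_T k]
    rw [show (2 : ℤ) * ((k₁ : ℤ) * ((k₁ : ℤ) + 1) / 2 + (k₂ : ℤ) * ((k₂ : ℤ) + 1) / 2
        + (k₁ : ℤ) * (k₂ : ℤ) - (k₁ : ℤ) - (k₂ : ℤ))
      = 2 * ((k₁ : ℤ) * ((k₁ : ℤ) + 1) / 2) + 2 * ((k₂ : ℤ) * ((k₂ : ℤ) + 1) / 2)
        + 2 * ((k₁ : ℤ) * (k₂ : ℤ)) - 2 * (k₁ : ℤ) - 2 * (k₂ : ℤ) by ring]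
    rw [two_T k₁, two_T k₂]
    linear_combination (-(k : ℤ) - (k₁ : ℤ) - (k₂ : ℤ)) * hkz
  rw [Int.modEq_iff_dvd] at hD ⊢
  obtain ⟨t, ht⟩ := hD
  refine ⟨((a : ℤ) + 1) * t + (k₂ : ℤ) * S.sum + P.sum - 1 + (k₁ : ℤ) * (k₂ : ℤ), ?_⟩
  rw [e1, e2, e3, hsum, hTT]
  push_cast
  linear_combination ((a : ℤ) + 1) * ht - hkz
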